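/- Let F be a field of odd characteristic p and n ≥ 2, k < n positive integers, a ∈ {1,…,p−2}, and d_0,…,d_{n−1} ∈ F. Set D = C_{d_0,…,d_{n−1}} + diag(a,…,a,0,…,0) with a repeated k times. For every polynomial g ∈ F[X] of degree at most n−2 there exist matrices E, M ∈ M_n(F) with D = E + M, E^p = E, and the characteristic polynomial of M equal to X^n + (k·1_F + d_{n−1})X^{n−1} + g. -/

import Mathlib

/-!
Write `D = C_d + diag Δ`. Pick `β` in the prime field with `∑ β = k (a + 1)` and `β_{n-1}`
different from every other `β_i` (this needs `-1 ≠ 1`, i.e. `p` odd). Then `diag β + c e_{n-1}ᵀ`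
is conjugate to `diag β` whenever `c_{n-1} = 0`, hence `p`-potent.

Expanding along the first row gives
`χ(C_d + diag s) = (X - s₀) χ(C_{tail d} + diag (tail s)) + d₀`, so dividing by `X - s₀` shows
that, for fixed `s`, every monic polynomial of degree `n` is `χ(C_{d'} + diag s)` for some `d'`.
Take `s = Δ - β` and the target polynomial: comparing traces forces `d'_{n-1} = d_{n-1}`, so
`E = D - (C_{d'} + diag s) = diag β + (d' - d) e_{n-1}ᵀ` works.
-/

open Polynomial

/-- The companion matrix of the polynomial `X^n + d_{n-1} X^{n-1} + ⋯ + d_0`. -/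
def companionMatrix {F : Type*} [Field F] {n : ℕ} (d : Fin n → F) :
    Matrix (Fin n) (Fin n) F :=
  Matrix.of fun i j =>
    if (j : ℕ) = n - 1 then -d i else if (i : ℕ) = (j : ℕ) + 1 then 1 else 0

open Matrix

theorem Polynomial.natDegree_X_pow_add {R : Type*} [Semiring R] [Nontrivial R] {p : R[X]} {n : ℕ}
    (hp : p.degree < n) : (X ^ n + p).natDegree = n := by
  rw [natDegree_add_eq_left_of_degree_lt (by rwa [degree_X_pow]), natDegree_X_pow]

theorem IsConj.pow_eq_self {M : Type*} [Monoid M] {a b : M} (h : IsConj a b) {n : ℕ}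
    (ha : a ^ n = a) : b ^ n = b := by
  obtain ⟨u, hu⟩ := h
  have hb : b = u * a * ↑u⁻¹ := by rw [hu.eq, Units.mul_inv_cancel_right]
  rw [hb, Units.conj_pow, ha]

theorem Matrix.charmatrix_submatrix {R ι κ : Type*} [CommRing R] [Fintype ι] [DecidableEq ι]
    [Fintype κ] [DecidableEq κ] (M : Matrix ι ι R) {f : κ → ι} (hf : Function.Injective f) :
    (charmatrix M).submatrix f f = charmatrix (M.submatrix f f) := by
  ext i j
  rcases eq_or_ne i j with rfl | hij
  · simp [charmatrix_apply_eq]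
  · rw [submatrix_apply, charmatrix_apply_ne _ _ _ (hf.ne hij), charmatrix_apply_ne _ _ _ hij,
      submatrix_apply]

theorem exists_sum_eq_and_ne_last {R : Type*} [CommRing R] (hR : (-1 : R) ≠ 1) (m : ℕ) (K : R) :
    ∃ β : Fin (m + 2) → R,
      ∑ i, β i = K ∧ ∀ i ≠ Fin.last (m + 1), β i ≠ β (Fin.last (m + 1)) := by
  by_cases hK : K = m
  · refine ⟨Fin.snoc (fun _ => 1) (-1), ?_, fun i hi => ?_⟩
    · simp [Fin.sum_snoc, hK]
    · obtain ⟨j, rfl⟩ := Fin.exists_castSucc_eq.2 hi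
      simpa using hR.symm
  · refine ⟨Fin.snoc (Fin.cons (K - m) fun _ => 1) 0, by simp [Fin.sum_snoc, Fin.sum_cons], ?_⟩
    intro i hi
    obtain ⟨j, rfl⟩ := Fin.exists_castSucc_eq.2 hi
    rw [Fin.snoc_castSucc, Fin.snoc_last]
    cases j using Fin.cases with
    | zero => simpa [sub_eq_zero] using hK
    | succ j => simpa using fun h : (1 : R) = 0 => hR (by simp [h])

section

variable {F : Type*} [Field F]

theorem companionMatrix_add_diagonal_submatrix_succ {m : ℕ} (d s : Fin (m + 2) → F) :
    (companionMatrix d + diagonal s).submatrix Fin.succ Fin.succ =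
      companionMatrix (Fin.tail d) + diagonal (Fin.tail s) := by
  ext i j
  simp [companionMatrix, diagonal_apply, Fin.tail, Fin.ext_iff]

theorem det_charmatrix_companionMatrix_add_diagonal_submatrix_succ_castSucc {m : ℕ}
    (d s : Fin (m + 2) → F) :
    ((charmatrix (companionMatrix d + diagonal s)).submatrix Fin.succ Fin.castSucc).det =
      (-1) ^ (m + 1) := by
  rw [det_of_isUpperTriangular]
  · have (i : Fin (m + 1)) :
        charmatrix (companionMatrix d + diagonal s) i.succ i.castSucc = -1 := by
      rw [charmatrix_apply_ne _ _ _ fun h => by simp [Fin.ext_iff] at h]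
      simp [companionMatrix, Fin.ext_iff, i.is_lt.ne]
    simp [this]
  · intro i j hij
    rw [id, id, Fin.lt_def] at hij
    rw [submatrix_apply, charmatrix_apply_ne _ _ _ fun h => by simp [Fin.ext_iff] at h; omega]
    simp only [companionMatrix, Nat.add_one_sub_one, Matrix.add_apply, of_apply, Fin.val_castSucc,
      j.is_lt.ne, ↓reduceIte, Fin.val_succ, Nat.add_right_cancel_iff, hij.ne', diagonal_apply,
      Fin.ext_iff, zero_add, neg_eq_zero, map_eq_zero, ite_eq_right_iff]
    omega

theorem charpoly_companionMatrix_add_diagonal_succ {m : ℕ} (d s : Fin (m + 1) → F) :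
    (companionMatrix d + diagonal s).charpoly =
      (X - C (s 0)) * (companionMatrix (Fin.tail d) + diagonal (Fin.tail s)).charpoly +
        C (d 0) := by
  rcases m with _ | m
  · simp only [charpoly, Nat.reduceAdd, companionMatrix, Fin.val_eq_zero, zero_add, tsub_self,
      ↓reduceIte, det_unique, Fin.default_eq_zero, Fin.isValue, charmatrix_apply_eq,
      Matrix.add_apply, of_apply, diagonal_apply_eq, map_add, map_neg, zero_tsub, det_fin_zero,
      mul_one]
    ring
  rw [charpoly, det_succ_row_zero, Fin.sum_univ_succ, Fin.sum_univ_castSucc]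
  have hzero (j : Fin m) : charmatrix (companionMatrix d + diagonal s) 0 j.castSucc.succ = 0 := by
    rw [charmatrix_apply_ne _ _ _ (Fin.succ_ne_zero _).symm]
    simp [companionMatrix, Fin.ext_iff, j.is_lt.ne]
  have h00 : charmatrix (companionMatrix d + diagonal s) 0 0 = X - C (s 0) := by
    simp [charmatrix_apply_eq, companionMatrix]
  have hlast : charmatrix (companionMatrix d + diagonal s) 0 (Fin.last (m + 1)) = C (d 0) := by
    rw [charmatrix_apply_ne _ _ _ Fin.last_pos.ne]
    simp [companionMatrix, Fin.ext_iff]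
  simp only [hzero, h00, hlast, Fin.val_zero, Fin.val_last, Nat.succ_eq_add_one, pow_zero,
    one_mul, mul_zero, zero_mul, Finset.sum_const_zero, zero_add, Fin.succ_last,
    Fin.succAbove_last, Fin.succAbove_zero, charmatrix_submatrix _ (Fin.succ_injective _),
    companionMatrix_add_diagonal_submatrix_succ,
    det_charmatrix_companionMatrix_add_diagonal_submatrix_succ_castSucc]
  have hsign : ((-1 : F[X]) ^ (m + 1)) * (-1) ^ (m + 1) = 1 := by rw [← mul_pow]; simp
  rw [charpoly]
  linear_combination C (d 0) * hsign

theorem exists_charpoly_companionMatrix_add_diagonal_eq {n : ℕ} (s : Fin n → F) {f : F[X]}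
    (hf : f.Monic) (hdeg : f.natDegree = n) :
    ∃ d : Fin n → F, (companionMatrix d + diagonal s).charpoly = f := by
  induction n generalizing f with
  | zero => exact ⟨Fin.elim0, by simp [eq_one_of_monic_natDegree_zero hf hdeg]⟩
  | succ n ih =>
    have hle : (X - C (s 0)).degree ≤ f.degree := by
      rw [degree_X_sub_C, degree_eq_natDegree hf.ne_zero, hdeg]
      exact_mod_cast n.succ_pos
    obtain ⟨d, hd⟩ := ih (Fin.tail s) (f := f /ₘ (X - C (s 0)))
      (by rw [Monic.def, leadingCoeff_divByMonic_of_monic (monic_X_sub_C _) hle, hf.leadingCoeff])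
      (by rw [natDegree_divByMonic _ (monic_X_sub_C _), hdeg, natDegree_X_sub_C]; rfl)
    refine ⟨Fin.cons (f.eval (s 0)) d, ?_⟩
    rw [charpoly_companionMatrix_add_diagonal_succ, Fin.tail_cons, Fin.cons_zero, hd,
      ← modByMonic_X_sub_C_eq_C_eval, add_comm, modByMonic_add_div]

theorem trace_companionMatrix {m : ℕ} (d : Fin (m + 1) → F) :
    trace (companionMatrix d) = -d (Fin.last m) := by
  have hdiag (i : Fin (m + 1)) :
      companionMatrix d i i = if i = Fin.last m then -d i else 0 := by
    simp [companionMatrix, Fin.ext_iff]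
  simp [trace, hdiag]

theorem coeff_charpoly_companionMatrix_add_diagonal {m : ℕ} (d s : Fin (m + 1) → F) :
    (companionMatrix d + diagonal s).charpoly.coeff m = d (Fin.last m) - ∑ i, s i := by
  have := trace_eq_neg_charpoly_coeff (companionMatrix d + diagonal s)
  rw [trace_add, trace_companionMatrix, trace_diagonal, Fintype.card_fin,
    Nat.add_sub_cancel] at this
  linear_combination this

theorem companionMatrix_sub_companionMatrix {m : ℕ} (d d' : Fin (m + 1) → F) :
    companionMatrix d - companionMatrix d' = vecMulVec (d' - d) (Pi.single (Fin.last m) 1) := by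
  ext i j
  simp only [companionMatrix, Matrix.sub_apply, of_apply, vecMulVec_apply, Pi.sub_apply,
    Pi.single_apply, Fin.ext_iff, Fin.val_last, Nat.add_sub_cancel]
  split_ifs <;> ring

theorem isConj_diagonal_add_vecMulVec_single {ι : Type*} [Fintype ι] [DecidableEq ι]
    {β c : ι → F} {l : ι} (hc : c l = 0) (hβ : ∀ i ≠ l, β i ≠ β l) :
    IsConj (diagonal β) (diagonal β + vecMulVec c (Pi.single l 1)) := by
  set N := vecMulVec (fun i => c i / (β l - β i)) (Pi.single l (1 : F))
  have hNN : N * N = 0 := by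
    simp [N, vecMulVec_mul_vecMulVec, hc]
  refine ⟨⟨1 + N, 1 - N, ?_, ?_⟩, ?_⟩
  · simp [mul_sub, add_mul, hNN]
  · simp [sub_mul, mul_add, hNN]
  · have hx (i : ι) : c i / (β l - β i) * β l = β i * (c i / (β l - β i)) + c i := by
      rcases eq_or_ne i l with rfl | hi
      · simp [hc]
      · field_simp [sub_ne_zero.2 (hβ i hi).symm]
        ring
    show (1 + N) * diagonal β = (diagonal β + vecMulVec c (Pi.single l 1)) * (1 + N)
    simp only [N, add_mul, mul_add, one_mul, mul_one, mul_vecMulVec, vecMulVec_mul]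
    ext i j
    simp only [single_vecMul, row_diagonal, one_smul, Matrix.add_apply, vecMulVec_apply,
      Pi.single_apply, mul_ite, mul_zero, vecMulVec_mulVec, single_dotProduct, hc, sub_self,
      div_zero, MulOpposite.op_zero, zero_smul, zero_vecMulVec, add_zero, mul_one, mulVec_diagonal,
      hx]
    split_ifs <;> ring

theorem diagonal_add_vecMulVec_single_pow_eq_self {ι : Type*} [Fintype ι] [DecidableEq ι]
    {β c : ι → F} {l : ι} (hc : c l = 0) (hβ : ∀ i ≠ l, β i ≠ β l) {n : ℕ}
    (hβn : ∀ i, β i ^ n = β i) :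
    (diagonal β + vecMulVec c (Pi.single l 1)) ^ n = diagonal β + vecMulVec c (Pi.single l 1) :=
  (isConj_diagonal_add_vecMulVec_single hc hβ).pow_eq_self <| by
    rw [diagonal_pow]
    exact congrArg _ (funext hβn)

theorem exists_pow_eq_self_sum_eq_and_ne_last (p : ℕ) [Fact p.Prime] (hp : Odd p) [CharP F p]
    (m K : ℕ) :
    ∃ β : Fin (m + 2) → F, (∀ i, β i ^ p = β i) ∧ ∑ i, β i = K ∧
      ∀ i ≠ Fin.last (m + 1), β i ≠ β (Fin.last (m + 1)) := by
  have : Fact (2 < p) :=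
    ⟨(Fact.out : p.Prime).two_le.lt_of_ne' (by rintro rfl; exact absurd hp (by decide))⟩
  obtain ⟨β, hsum, hne⟩ := exists_sum_eq_and_ne_last ZMod.neg_one_ne_one m (K : ZMod p)
  set φ := ZMod.castHom (dvd_refl p) F
  exact ⟨fun i => φ (β i), fun i => by rw [← map_pow, ZMod.pow_card],
    by rw [← map_sum, hsum, map_natCast], fun i hi => φ.injective.ne (hne i hi)⟩

end

theorem stmt_10 {F : Type*} [Field F] (p : ℕ) [Fact p.Prime] (hp : Odd p)
    [CharP F p] (n k a : ℕ) (hn : 2 ≤ n) (hkn : k < n)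
    (d : Fin n → F)
    (D : Matrix (Fin n) (Fin n) F)
    (hD : D = companionMatrix d +
        Matrix.diagonal (fun i : Fin n => if (i : ℕ) < k then (a : F) else 0))
    (g : Polynomial F) (hg : g.degree ≤ (n - 2 : ℕ)) :
    ∃ E M : Matrix (Fin n) (Fin n) F,
      D = E + M ∧ E ^ p = E ∧
        M.charpoly = X ^ n + C ((k : F) + d ⟨n - 1, by omega⟩) * X ^ (n - 1) + g := by
  obtain ⟨m, rfl⟩ : ∃ m, n = m + 2 := ⟨n - 2, by omega⟩
  obtain ⟨β, hβp, hβsum, hβne⟩ :=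
    exists_pow_eq_self_sum_eq_and_ne_last (F := F) p hp m (k * (a + 1))
  set Δ : Fin (m + 2) → F := fun i => if (i : ℕ) < k then (a : F) else 0
  set b : F := (k : F) + d (Fin.last (m + 1))
  have hr : (C b * X ^ (m + 1) + g).degree < ↑(m + 2) :=
    (degree_add_le _ _).trans_lt <| max_lt
      ((degree_C_mul_X_pow_le _ _).trans_lt (by exact_mod_cast (m + 1).lt_succ_self))
      (hg.trans_lt (by exact_mod_cast (by omega : m + 2 - 2 < m + 2)))
  obtain ⟨d', hd'⟩ := exists_charpoly_companionMatrix_add_diagonal_eq (Δ - β)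
    (monic_X_pow_add hr) (natDegree_X_pow_add hr)
  have hlast : d' (Fin.last (m + 1)) = d (Fin.last (m + 1)) := by
    have h := coeff_charpoly_companionMatrix_add_diagonal d' (Δ - β)
    have hg' : g.coeff (m + 1) = 0 :=
      coeff_eq_zero_of_degree_lt (hg.trans_lt (by exact_mod_cast (by omega : m + 2 - 2 < m + 1)))
    have hΔ : ∑ i, Δ i = k * a := by
      simp [Δ, Finset.sum_ite, Fin.card_filter_val_lt, min_eq_right hkn.le]
    rw [hd', coeff_add, coeff_add, coeff_X_pow, if_neg (by omega), coeff_C_mul_X_pow, if_pos rfl,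
      hg'] at h
    simp only [Pi.sub_apply, Finset.sum_sub_distrib, hΔ, hβsum, b] at h
    push_cast at h
    linear_combination -h
  refine ⟨diagonal β + vecMulVec (d' - d) (Pi.single (Fin.last (m + 1)) 1),
    companionMatrix d' + diagonal (Δ - β), ?_,
    diagonal_add_vecMulVec_single_pow_eq_self (by simp [hlast]) hβne hβp,
    hd'.trans (add_assoc _ _ _).symm⟩
  have hdiag : diagonal (Δ - β) = diagonal Δ - diagonal β := (diagonal_sub Δ β).symm
  rw [hD, ← companionMatrix_sub_companionMatrix, hdiag]
  abel
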